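/- Let ρ be a p×p complex matrix with operator norm ‖ρ‖ < 1. Define the Halmos extension C := D·F, where D = diag{(I_p − ρρ*)^{−1/2}, (I_p − ρ*ρ)^{−1/2}} and F = [[I_p, ρ],[ρ*, I_p]] (2p×2p block matrices), and set j := diag{I_p, −I_p}. Then C = C*, C is positive definite, and C j C = j. Moreover, the upper-left p×p block C_{11} of C is invertible and (C_{11})^{−1} C_{12} = ρ, where C_{12} is the upper-right p×p block; thus ρ is recovered from C. -/

import Mathlib

/-
Write `S = 1 - ρρᴴ`, `T = 1 - ρᴴρ`, `A = S^{-1/2}` and `B = T^{-1/2}`, so that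
`C = [[A, Aρ], [Bρᴴ, B]]`. Everything rests on the intertwining relation `ρ f(T) = f(S) ρ`: it
holds for polynomials `f` because `ρ T = S ρ`, and a matrix has finite spectrum, so `f(t) = t^{-1/2}`
agrees with a polynomial there. It gives `ρB = Aρ` and `ρᴴA = Bρᴴ`, which make `C` Hermitian and
reduce `C j C = j` to `A S A = 1` and `B T B = 1`. The Schur complement of `A > 0` in `C` is
`B - ρᴴAρ = B T = T^{1/2} ≥ 0`, and `C` is invertible since `C j C = j`, so `C > 0`.
-/

open Matrix
open scoped ComplexOrder

noncomputable section

/-- `X^{-1/2}` for a positive semidefinite matrix `X` (junk value `0` otherwise). -/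
def invSqrt {p : ℕ} (X : Matrix (Fin p) (Fin p) ℂ) : Matrix (Fin p) (Fin p) ℂ :=
  open scoped Classical in
  if h : X.PosSemidef then
    ((h.1.eigenvectorUnitary : Matrix (Fin p) (Fin p) ℂ) *
      diagonal ((RCLike.ofReal : ℝ → ℂ) ∘ Real.sqrt ∘ h.1.eigenvalues) *
      (star h.1.eigenvectorUnitary : Matrix (Fin p) (Fin p) ℂ))⁻¹ else 0

/-- The Halmos extension `C = D F` of a strictly contractive `p × p` matrix `ρ`. -/
def halmos {p : ℕ} (ρ : Matrix (Fin p) (Fin p) ℂ) :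
    Matrix (Fin p ⊕ Fin p) (Fin p ⊕ Fin p) ℂ :=
  Matrix.fromBlocks (invSqrt (1 - ρ * ρᴴ)) 0 0 (invSqrt (1 - ρᴴ * ρ)) *
    Matrix.fromBlocks 1 ρ ρᴴ 1

theorem SemiconjBy.aeval {R A : Type*} [CommSemiring R] [Semiring A] [Algebra R A]
    {x a b : A} (h : SemiconjBy x a b) (q : Polynomial R) :
    SemiconjBy x (Polynomial.aeval a q) (Polynomial.aeval b q) := by
  induction q using Polynomial.induction_on' with
  | add q r hq hr => simpa only [map_add] using hq.add_right hr
  | monomial k r =>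
    simpa only [Polynomial.aeval_monomial] using
      SemiconjBy.mul_right (Algebra.commutes r x).symm (h.pow_right k)

theorem SemiconjBy.cfc_of_finite_spectrum {A : Type*} [Ring A] [StarRing A] [Algebra ℝ A]
    [TopologicalSpace A] [ContinuousFunctionalCalculus ℝ A IsSelfAdjoint]
    {x a b : A} (h : SemiconjBy x a b) (ha : IsSelfAdjoint a) (hb : IsSelfAdjoint b)
    (ha' : (spectrum ℝ a).Finite) (hb' : (spectrum ℝ b).Finite) (f : ℝ → ℝ) :
    SemiconjBy x (cfc f a) (cfc f b) := by
  classical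
  set s := ha'.toFinset ∪ hb'.toFinset
  set q := Lagrange.interpolate s id f
  have cfc_eq_aeval : ∀ c : A, spectrum ℝ c ⊆ s → IsSelfAdjoint c →
      cfc f c = Polynomial.aeval c q := fun c hc hsa => by
    rw [← cfc_polynomial q c hsa]
    exact cfc_congr fun t ht =>
      (Lagrange.eval_interpolate_at_node f (Set.injOn_id _) (Finset.mem_coe.mp (hc ht))).symm
  rw [cfc_eq_aeval a (by simp [s]) ha, cfc_eq_aeval b (by simp [s]) hb]
  exact h.aeval q

theorem isStrictlyPositive_one_sub_star_mul_self {A : Type*} [CStarAlgebra A] [PartialOrder A]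
    [StarOrderedRing A] {a : A} (ha : ‖a‖ < 1) : IsStrictlyPositive (1 - star a * a) := by
  have hpos : IsStrictlyPositive (algebraMap ℝ A (1 - ‖a‖ ^ 2)) :=
    isStrictlyPositive_algebraMap (by nlinarith [norm_nonneg a])
  refine hpos.of_le ?_
  rw [map_sub, map_one]
  exact sub_le_sub_left CStarAlgebra.star_mul_le_algebraMap_norm_sq 1

namespace Matrix

theorem fromBlocks_mul_fromBlocks_one_neg_one_mul_self {R m n : Type*} [Ring R]
    [Fintype m] [Fintype n] [DecidableEq m] [DecidableEq n]
    {A : Matrix m m R} {B : Matrix n n R} {ρ : Matrix m n R} {σ : Matrix n m R}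
    (hρ : ρ * B = A * ρ) (hσ : σ * A = B * σ)
    (hA : A * (1 - ρ * σ) * A = 1) (hB : B * (1 - σ * ρ) * B = 1) :
    fromBlocks A (A * ρ) (B * σ) B * fromBlocks 1 0 0 (-1) * fromBlocks A (A * ρ) (B * σ) B =
      fromBlocks 1 0 0 (-1) := by
  simp only [fromBlocks_multiply, Matrix.mul_zero, Matrix.mul_one, Matrix.mul_neg,
    Matrix.neg_mul, add_zero, zero_add, Matrix.mul_assoc]
  simp only [Matrix.mul_sub, Matrix.sub_mul, Matrix.mul_one, Matrix.mul_assoc] at hA hB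
  congr 1
  · rw [← hσ, ← hA, sub_eq_add_neg]
  · rw [hρ, add_neg_cancel]
  · rw [hσ, add_neg_cancel]
  · rw [← hρ, ← hB, neg_sub, sub_eq_add_neg]

open scoped MatrixOrder Matrix.Norms.L2Operator

variable {n : Type*} [Fintype n] [DecidableEq n]

theorem semiconjBy_rpow {x a b : Matrix n n ℂ} (h : SemiconjBy x a b) (ha : 0 ≤ a) (hb : 0 ≤ b)
    (y : ℝ) : SemiconjBy x (a ^ y) (b ^ y) := by
  rw [CFC.rpow_eq_cfc_real ha, CFC.rpow_eq_cfc_real hb]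
  exact h.cfc_of_finite_spectrum ha.posSemidef.1 hb.posSemidef.1 finite_real_spectrum
    finite_real_spectrum _

theorem isHermitian_rpow (a : Matrix n n ℂ) (y : ℝ) : (a ^ y).IsHermitian :=
  (CFC.rpow_nonneg (a := a) (y := y)).posSemidef.1

def halmosDilation (ρ : Matrix n n ℂ) : Matrix (n ⊕ n) (n ⊕ n) ℂ :=
  fromBlocks ((1 - ρ * ρᴴ) ^ (-(1 / 2) : ℝ)) 0 0 ((1 - ρᴴ * ρ) ^ (-(1 / 2) : ℝ)) *
    fromBlocks 1 ρ ρᴴ 1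

theorem halmosDilation_eq_fromBlocks (ρ : Matrix n n ℂ) : halmosDilation ρ =
    fromBlocks ((1 - ρ * ρᴴ) ^ (-(1 / 2) : ℝ)) ((1 - ρ * ρᴴ) ^ (-(1 / 2) : ℝ) * ρ)
      ((1 - ρᴴ * ρ) ^ (-(1 / 2) : ℝ) * ρᴴ) ((1 - ρᴴ * ρ) ^ (-(1 / 2) : ℝ)) := by
  simp [halmosDilation, fromBlocks_multiply]

variable {ρ : Matrix n n ℂ}

theorem isStrictlyPositive_one_sub_conjTranspose_mul_self (hρ : ‖ρ‖ < 1) :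
    IsStrictlyPositive (1 - ρᴴ * ρ) :=
  isStrictlyPositive_one_sub_star_mul_self hρ

theorem isStrictlyPositive_one_sub_mul_conjTranspose (hρ : ‖ρ‖ < 1) :
    IsStrictlyPositive (1 - ρ * ρᴴ) := by
  simpa [star_eq_conjTranspose] using
    isStrictlyPositive_one_sub_star_mul_self (a := ρᴴ) (by rwa [l2_opNorm_conjTranspose])

theorem mul_rpow_one_sub_conjTranspose_mul_self (hρ : ‖ρ‖ < 1) (y : ℝ) :
    ρ * (1 - ρᴴ * ρ) ^ y = (1 - ρ * ρᴴ) ^ y * ρ :=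
  semiconjBy_rpow (show ρ * _ = _ * ρ by noncomm_ring)
    (isStrictlyPositive_one_sub_conjTranspose_mul_self hρ).nonneg
    (isStrictlyPositive_one_sub_mul_conjTranspose hρ).nonneg y

theorem conjTranspose_mul_rpow_one_sub_mul_conjTranspose (hρ : ‖ρ‖ < 1) (y : ℝ) :
    ρᴴ * (1 - ρ * ρᴴ) ^ y = (1 - ρᴴ * ρ) ^ y * ρᴴ := by
  simpa using mul_rpow_one_sub_conjTranspose_mul_self (ρ := ρᴴ)
    (by rwa [l2_opNorm_conjTranspose]) y

theorem isHermitian_halmosDilation (hρ : ‖ρ‖ < 1) : (halmosDilation ρ).IsHermitian := by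
  rw [halmosDilation_eq_fromBlocks]
  refine IsHermitian.fromBlocks (isHermitian_rpow _ _) ?_ (isHermitian_rpow _ _)
  rw [conjTranspose_mul, (isHermitian_rpow _ _).eq,
    conjTranspose_mul_rpow_one_sub_mul_conjTranspose hρ]

theorem halmosDilation_mul_fromBlocks_one_neg_one_mul_self (hρ : ‖ρ‖ < 1) :
    halmosDilation ρ * fromBlocks 1 0 0 (-1) * halmosDilation ρ = fromBlocks 1 0 0 (-1) := by
  rw [halmosDilation_eq_fromBlocks]
  exact fromBlocks_mul_fromBlocks_one_neg_one_mul_self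
    (mul_rpow_one_sub_conjTranspose_mul_self hρ _)
    (conjTranspose_mul_rpow_one_sub_mul_conjTranspose hρ _)
    (CFC.conjugate_rpow_neg_one_half _ (isStrictlyPositive_one_sub_mul_conjTranspose hρ))
    (CFC.conjugate_rpow_neg_one_half _ (isStrictlyPositive_one_sub_conjTranspose_mul_self hρ))

theorem isUnit_halmosDilation (hρ : ‖ρ‖ < 1) : IsUnit (halmosDilation ρ) := by
  set j : Matrix (n ⊕ n) (n ⊕ n) ℂ := fromBlocks 1 0 0 (-1)
  have hjj : j * j = 1 := by simp [j, fromBlocks_multiply, ← fromBlocks_one]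
  refine IsUnit.of_mul_eq_one (j * halmosDilation ρ * j) ?_
  rw [← Matrix.mul_assoc, ← Matrix.mul_assoc, halmosDilation_mul_fromBlocks_one_neg_one_mul_self hρ,
    hjj]

theorem posSemidef_halmosDilation (hρ : ‖ρ‖ < 1) : (halmosDilation ρ).PosSemidef := by
  rw [halmosDilation_eq_fromBlocks]
  have hS := isStrictlyPositive_one_sub_mul_conjTranspose hρ
  set A := (1 - ρ * ρᴴ) ^ (-(1 / 2) : ℝ)
  set B := (1 - ρᴴ * ρ) ^ (-(1 / 2) : ℝ)
  have hA : A.PosDef := (IsStrictlyPositive.rpow _ _ hS).posDef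
  have hB' : B * ρᴴ = (A * ρ)ᴴ := by
    rw [conjTranspose_mul, hA.1.eq, conjTranspose_mul_rpow_one_sub_mul_conjTranspose hρ]
  have := hA.isUnit.invertible
  have hT := isStrictlyPositive_one_sub_conjTranspose_mul_self hρ
  have schur : B - (A * ρ)ᴴ * A⁻¹ * (A * ρ) = (1 - ρᴴ * ρ) ^ (1 / 2 : ℝ) :=
    calc B - (A * ρ)ᴴ * A⁻¹ * (A * ρ) = B * (1 - ρᴴ * ρ) := by
          rw [← hB', Matrix.mul_assoc, inv_mul_cancel_left_of_invertible, Matrix.mul_sub,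
            Matrix.mul_one, Matrix.mul_assoc]
      _ = (1 - ρᴴ * ρ) ^ (-(1 / 2) + 1 : ℝ) := by
          rw [CFC.rpow_add hT.isUnit, CFC.rpow_one _ hT.nonneg]
      _ = (1 - ρᴴ * ρ) ^ (1 / 2 : ℝ) := by norm_num
  rw [hB', PosDef.fromBlocks₁₁ _ _ hA, schur]
  exact CFC.rpow_nonneg.posSemidef

theorem posDef_halmosDilation (hρ : ‖ρ‖ < 1) : (halmosDilation ρ).PosDef :=
  (posSemidef_halmosDilation hρ).posDef_iff_isUnit.mpr (isUnit_halmosDilation hρ)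

theorem isUnit_toBlocks₁₁_halmosDilation (hρ : ‖ρ‖ < 1) :
    IsUnit (halmosDilation ρ).toBlocks₁₁ := by
  rw [halmosDilation_eq_fromBlocks, toBlocks_fromBlocks₁₁]
  exact (IsStrictlyPositive.rpow _ _ (isStrictlyPositive_one_sub_mul_conjTranspose hρ)).isUnit

theorem inv_toBlocks₁₁_mul_toBlocks₁₂_halmosDilation (hρ : ‖ρ‖ < 1) :
    ((halmosDilation ρ).toBlocks₁₁)⁻¹ * (halmosDilation ρ).toBlocks₁₂ = ρ := by
  have hunit := isUnit_toBlocks₁₁_halmosDilation hρ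
  rw [halmosDilation_eq_fromBlocks, toBlocks_fromBlocks₁₁, toBlocks_fromBlocks₁₂] at *
  exact nonsing_inv_mul_cancel_left _ ρ ((isUnit_iff_isUnit_det _).mp hunit)

end Matrix

section

open scoped MatrixOrder Matrix.Norms.L2Operator

theorem invSqrt_eq_rpow {p : ℕ} {X : Matrix (Fin p) (Fin p) ℂ} (hX : X.PosDef) :
    invSqrt X = X ^ (-(1 / 2) : ℝ) := by
  have hsqrt : hX.1.eigenvectorUnitary.1 *
      diagonal ((RCLike.ofReal : ℝ → ℂ) ∘ Real.sqrt ∘ hX.1.eigenvalues) *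
      star hX.1.eigenvectorUnitary.1 = X ^ (1 / 2 : ℝ) := by
    rw [← CFC.sqrt_eq_rpow, CFC.sqrt_eq_real_sqrt X hX.posSemidef.nonneg, cfcₙ_eq_cfc, hX.1.cfc_eq, IsHermitian.cfc,
      Unitary.conjStarAlgAut_apply]
  rw [invSqrt, dif_pos hX.posSemidef, hsqrt]
  exact inv_eq_left_inv (CFC.rpow_neg_mul_rpow _ hX.isStrictlyPositive)

theorem halmos_eq_halmosDilation {p : ℕ} {ρ : Matrix (Fin p) (Fin p) ℂ} (hρ : ‖ρ‖ < 1) :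
    halmos ρ = halmosDilation ρ := by
  rw [halmos, halmosDilation,
    invSqrt_eq_rpow (isStrictlyPositive_one_sub_mul_conjTranspose hρ).posDef,
    invSqrt_eq_rpow (isStrictlyPositive_one_sub_conjTranspose_mul_self hρ).posDef]

end

theorem halmos_extension_properties_general
    {p : ℕ} (ρ : Matrix (Fin p) (Fin p) ℂ)
    (hρ : ‖Matrix.toEuclideanCLM (𝕜 := ℂ) ρ‖ < 1) :
    (halmos ρ)ᴴ = halmos ρ ∧
    (halmos ρ).PosDef ∧
    halmos ρ * (Matrix.fromBlocks 1 0 0 (-1) : Matrix (Fin p ⊕ Fin p) (Fin p ⊕ Fin p) ℂ) *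
        halmos ρ = Matrix.fromBlocks 1 0 0 (-1) ∧
    IsUnit ((halmos ρ).toBlocks₁₁) ∧
    ((halmos ρ).toBlocks₁₁)⁻¹ * (halmos ρ).toBlocks₁₂ = ρ := by
  open scoped Matrix.Norms.L2Operator in
  have hρ' : ‖ρ‖ < 1 := hρ
  rw [halmos_eq_halmosDilation hρ']
  exact ⟨isHermitian_halmosDilation hρ', posDef_halmosDilation hρ',
    halmosDilation_mul_fromBlocks_one_neg_one_mul_self hρ', isUnit_toBlocks₁₁_halmosDilation hρ',
    inv_toBlocks₁₁_mul_toBlocks₁₂_halmosDilation hρ'⟩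

/-- properties of the Halmos extension `C` of a strict contraction `ρ`:
`C = C^* > 0`, `C j C = j`, and `ρ` is recovered via `ρ = (C₁₁)⁻¹ C₁₂`. -/
theorem halmos_extension_properties
    {p : ℕ} (hp : 1 ≤ p) (ρ : Matrix (Fin p) (Fin p) ℂ)
    (hρ : ‖Matrix.toEuclideanCLM (𝕜 := ℂ) ρ‖ < 1) :
    (halmos ρ)ᴴ = halmos ρ ∧
    (halmos ρ).PosDef ∧
    halmos ρ * (Matrix.fromBlocks 1 0 0 (-1) : Matrix (Fin p ⊕ Fin p) (Fin p ⊕ Fin p) ℂ) *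
        halmos ρ = Matrix.fromBlocks 1 0 0 (-1) ∧
    IsUnit ((halmos ρ).toBlocks₁₁) ∧
    ((halmos ρ).toBlocks₁₁)⁻¹ * (halmos ρ).toBlocks₁₂ = ρ :=
  halmos_extension_properties_general ρ hρ

end
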